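/- Let π be a permutation gate in 𝒞₃. Then π is in staircase form if and only if all of the following hold: π(0) = 0; π(eᵢ) = eᵢ for all i ∈ [n]; and for every vector v ∈ 𝔽₂ⁿ with at least two nonzero coordinates, the indices of the first two nonzero coordinates of v coincide with the indices of the first two nonzero coordinates of π(v). -/

import Mathlib

/-! Common framework: qubit gates, the Pauli group, the Clifford hierarchy,
permutation gates, Toffoli gates and staircase form, descending multiplications,
multilinear polynomial representations. -/

/-- Vectors in `𝔽₂ⁿ`, indexing computational basis states. -/
abbrev QV (n : ℕ) := Fin n → ZMod 2

/-- `n`-qubit gates: `2ⁿ × 2ⁿ` complex matrices indexed by `𝔽₂ⁿ`. -/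
abbrev QMat (n : ℕ) := Matrix (QV n) (QV n) ℂ

/-- Standard basis vector `eᵢ` of `𝔽₂ⁿ`. -/
def stdBasis (n : ℕ) (i : Fin n) : QV n := fun m => if m = i then 1 else 0

/-- The gate `X^u Z^z`, sending `|b⟩` to `(-1)^(z·b) |b+u⟩`. -/
noncomputable def XZGate (n : ℕ) (u z : QV n) : QMat n :=
  fun a b => if a = b + u then (-1 : ℂ) ^ (∑ i, (z i).val * (b i).val) else 0

/-- The Pauli group on `n` qubits: gates `c·P₁⊗⋯⊗Pₙ`, `c ∈ {±1, ±i}`,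
`Pᵢ ∈ {I,X,Y,Z}`, equivalently phases times `X^u Z^z`. -/
def PauliGroup (n : ℕ) : Set (QMat n) :=
  { P | ∃ (c : ℂ) (u z : QV n),
      (c = 1 ∨ c = -1 ∨ c = Complex.I ∨ c = -Complex.I) ∧ P = c • XZGate n u z }

/-- Level `k` of the Clifford hierarchy `𝒞ₖ` (level 1 is the Pauli group,
level 2 the Clifford group; level 0 is junk/empty). -/
def CliffordLevel (n : ℕ) : ℕ → Set (QMat n)
  | 0 => ∅
  | 1 => PauliGroup n
  | (k+2) => { U | U ∈ Matrix.unitaryGroup (QV n) ℂ ∧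
      ∀ P ∈ PauliGroup n, U * P * star U ∈ CliffordLevel n (k+1) }

/-- The permutation gate of a permutation `f` of `𝔽₂ⁿ`: sends `|v⟩` to `|f v⟩`. -/
noncomputable def permGate (n : ℕ) (f : QV n ≃ QV n) : QMat n :=
  fun a b => if a = f b then 1 else 0

/-- A diagonal gate. -/
def IsDiagonal (n : ℕ) (d : QMat n) : Prop := ∀ a b : QV n, a ≠ b → d a b = 0

/-- A gate is semi-Clifford if it equals `φ₁ d φ₂` for Clifford `φ₁, φ₂` and diagonal `d`. -/
def IsSemiClifford (n : ℕ) (U : QMat n) : Prop :=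
  ∃ φ₁ d φ₂ : QMat n, φ₁ ∈ CliffordLevel n 2 ∧ φ₂ ∈ CliffordLevel n 2 ∧
    IsDiagonal n d ∧ U = φ₁ * d * φ₂

/-- The underlying map of the Toffoli gate `TOF_{i,j,k}`: `v ↦ v + (vᵢvⱼ)·eₖ`. -/
def tofFun (n : ℕ) (i j k : Fin n) (v : QV n) : QV n :=
  fun m => if m = k then v m + v i * v j else v m

/-- A map on `𝔽₂ⁿ` is in staircase form if it is a product (applied left-to-right)
of pairwise distinct Toffoli gates `TOF_{i,j,k}` with `i<j<k` and with targets
nondecreasing in the order the gates are applied. -/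
def IsStaircase (n : ℕ) (g : QV n → QV n) : Prop :=
  ∃ L : List (Fin n × Fin n × Fin n),
    L.Nodup ∧
    (∀ t ∈ L, t.1 < t.2.1 ∧ t.2.1 < t.2.2) ∧
    List.Chain' (fun s t => s.2.2 ≤ t.2.2) L ∧
    g = fun v => L.foldl (fun w t => tofFun n t.1 t.2.1 t.2.2 w) v

/-- A descending multiplication on `𝔽₂ⁿ`: bilinear, associative, commutative,
`eᵢeᵢ = 0`, and for `i < j`, `eᵢeⱼ ∈ span{eₖ : k > j}`. -/
def IsDescendingMul (n : ℕ) (mul : QV n → QV n → QV n) : Prop :=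
  (∀ u v w : QV n, mul (u + v) w = mul u w + mul v w) ∧
  (∀ u v w : QV n, mul u (v + w) = mul u v + mul u w) ∧
  (∀ u v w : QV n, mul (mul u v) w = mul u (mul v w)) ∧
  (∀ u v : QV n, mul u v = mul v u) ∧
  (∀ i : Fin n, mul (stdBasis n i) (stdBasis n i) = 0) ∧
  (∀ i j : Fin n, i < j → ∀ m : Fin n, m ≤ j → mul (stdBasis n i) (stdBasis n j) m = 0)

/-- The product `∏_{i ∈ l} eᵢ` under a multiplication, for a list `l` (junk `0` on `[]`). -/
def dmProdList (n : ℕ) (mul : QV n → QV n → QV n) : List (Fin n) → QV n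
  | [] => 0
  | [i] => stdBasis n i
  | i :: j :: rest => mul (stdBasis n i) (dmProdList n mul (j :: rest))

/-- The product `∏_{i ∈ T} eᵢ` under a multiplication. -/
def dmProd (n : ℕ) (mul : QV n → QV n → QV n) (T : Finset (Fin n)) : QV n :=
  dmProdList n mul (T.sort (· ≤ ·))

/-- `g` is the map `∑_{i∈S} eᵢ ↦ ∑_{∅≠T⊆S} ∏_{i∈T} eᵢ` associated to a multiplication. -/
def dmPiSpec (n : ℕ) (mul : QV n → QV n → QV n) (g : QV n → QV n) : Prop :=
  ∀ S : Finset (Fin n),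
    g (∑ i ∈ S, stdBasis n i) = ∑ T ∈ S.powerset.erase ∅, dmProd n mul T

/-- The bilinear extension of `eᵢeⱼ := g(eᵢ+eⱼ) + eᵢ + eⱼ`. -/
def inducedMul (n : ℕ) (g : QV n → QV n) (u v : QV n) : QV n :=
  ∑ i : Fin n, ∑ j : Fin n,
    (u i * v j) • (g (stdBasis n i + stdBasis n j) + stdBasis n i + stdBasis n j)

/-- Coefficient of the monomial `∏_{i∈T} aᵢ` in the unique multilinear polynomial
over `𝔽₂` representing `g : 𝔽₂ⁿ → 𝔽₂` (Möbius inversion over `𝔽₂`). -/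
def mlCoeff (n : ℕ) (g : QV n → ZMod 2) (T : Finset (Fin n)) : ZMod 2 :=
  ∑ R ∈ T.powerset, g (∑ i ∈ R, stdBasis n i)

/-- Strictly lower triangular matrix. -/
def StrictLowerTri (n : ℕ) (A : Matrix (Fin n) (Fin n) (ZMod 2)) : Prop :=
  ∀ p q : Fin n, p ≤ q → A p q = 0

/-- Multiplication of basis vectors for the gate `U_k`: the basis of `𝔽₂^(2^k-1)` is
indexed by nonempty subsets `S ⊆ [k]`, encoded as indices `a` via the binary digits of
`a+1`; `e_S e_T = e_{S∪T}` if `S ∩ T = ∅` and `e_S e_T = 0` otherwise. -/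
def ukBasisMul (k : ℕ) (a b : Fin (2 ^ k - 1)) : QV (2 ^ k - 1) :=
  if (a.val + 1) &&& (b.val + 1) = 0 then
    (if h : a.val + b.val + 1 < 2 ^ k - 1 then stdBasis (2 ^ k - 1) ⟨a.val + b.val + 1, h⟩
     else 0)
  else 0

/-- The descending multiplication defining `U_k`, extended bilinearly. -/
def ukMul (k : ℕ) (u v : QV (2 ^ k - 1)) : QV (2 ^ k - 1) :=
  ∑ a : Fin (2 ^ k - 1), ∑ b : Fin (2 ^ k - 1), (u a * v b) • ukBasisMul k a b

/-- `i` and `j` are the indices of the first two nonzero coordinates of `v`. -/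
def FirstTwoIndices (n : ℕ) (v : QV n) (i j : Fin n) : Prop :=
  i < j ∧ v i = 1 ∧ v j = 1 ∧ ∀ m : Fin n, m < j → m ≠ i → v m = 0

/-! A Toffoli gate `TOF_{i,j,k}` with `i < j < k` fixes `0` and every `eᵢ`, and it cannot touch the
coordinates up to the second nonzero one of its input; this gives one direction.

Conversely, let `π ∈ 𝒞₃`. Conjugating `Z^z` by `π` gives a diagonal Clifford gate `D`, and since
`D X^w D†` is Pauli, every discrete derivative of `x ↦ z · π⁻¹(x)` is affine. So `π⁻¹` is
quadratic, and as it fixes `0` and the `eᵢ`, `π⁻¹(v)ₖ = vₖ + ∑_{i<j} cₖᵢⱼ vᵢvⱼ`. The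
first-two-indices condition passes to `π⁻¹` and, applied to `eᵢ + eⱼ`, forces `cₖᵢⱼ = 0` unless
`i < j < k`. The gates `TOF_{i,j,k}` with `cₖᵢⱼ = 1`, applied in order of increasing target,
then solve the triangular system `π⁻¹(w) = v` for `w`, so their product is `π`. -/

open scoped Matrix

section Toffoli

variable {n : ℕ}

lemma zmod_two_eq_zero_or_one (a : ZMod 2) : a = 0 ∨ a = 1 := by
  revert a
  decide

lemma stdBasis_eq_single (i : Fin n) : stdBasis n i = Pi.single i 1 := by
  funext m
  simp [stdBasis, Pi.single_apply]

lemma tofFun_zero (i j k : Fin n) : tofFun n i j k 0 = 0 := by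
  funext m
  simp [tofFun]

lemma tofFun_stdBasis {i j : Fin n} (hij : i ≠ j) (k s : Fin n) :
    tofFun n i j k (stdBasis n s) = stdBasis n s := by
  funext m
  by_cases hi : i = s
  · subst hi
    simp [tofFun, stdBasis, Ne.symm hij]
  · simp [tofFun, stdBasis, hi]

/-- If the gate fired with target at most `j`, both its controls would be nonzero coordinates
before `j`. -/
lemma firstTwoIndices_tofFun {v : QV n} {i j a b c : Fin n} (h : FirstTwoIndices n v i j)
    (hab : a < b) (hbc : b < c) : FirstTwoIndices n (tofFun n a b c v) i j := by
  obtain ⟨hij, hi, hj, hzero⟩ := h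
  have hfix : ∀ m ≤ j, tofFun n a b c v m = v m := by
    intro m hm
    by_cases hmc : m = c
    · subst hmc
      have hbj : b < j := hbc.trans_le hm
      have hctrl : v a * v b = 0 := by
        by_cases hbi : b = i
        · subst hbi
          rw [hzero a (hab.trans hbj) hab.ne, zero_mul]
        · rw [hzero b hbj hbi, mul_zero]
      simp [tofFun, hctrl]
    · simp [tofFun, hmc]
  exact ⟨hij, (hfix i hij.le).trans hi, (hfix j le_rfl).trans hj,
    fun m hm hmi => (hfix m hm.le).trans (hzero m hm hmi)⟩

def tofProd (L : List (Fin n × Fin n × Fin n)) (v : QV n) : QV n :=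
  L.foldl (fun w t => tofFun n t.1 t.2.1 t.2.2 w) v

lemma IsStaircase.preserves {g : QV n → QV n} (hg : IsStaircase n g) {P : QV n → Prop}
    (hP : ∀ i j k v, i < j → j < k → P v → P (tofFun n i j k v)) {v : QV n} (hv : P v) :
    P (g v) := by
  obtain ⟨L, -, hL, -, rfl⟩ := hg
  induction L generalizing v with
  | nil => exact hv
  | cons t L ih =>
    obtain ⟨h1, h2⟩ := hL t List.mem_cons_self
    exact ih (hP _ _ _ _ h1 h2 hv) (fun s hs => hL s (List.mem_cons_of_mem t hs))

end Toffoli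

section FirstTwo

variable {n : ℕ}

lemma firstTwoIndices_stdBasis_add_stdBasis {i j : Fin n} (hij : i < j) :
    FirstTwoIndices n (stdBasis n i + stdBasis n j) i j := by
  refine ⟨hij, ?_, ?_, fun m hm hmi => ?_⟩
  · simp [stdBasis, hij.ne]
  · simp [stdBasis, hij.ne']
  · simp [stdBasis, hm.ne, hmi]

namespace FirstTwoIndices

variable {v : QV n} {i j : Fin n}

lemma ne_zero (h : FirstTwoIndices n v i j) : v ≠ 0 := by
  rintro rfl
  simpa using h.2.1

lemma ne_stdBasis (h : FirstTwoIndices n v i j) (a : Fin n) : v ≠ stdBasis n a := by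
  rintro rfl
  obtain ⟨hij, hi, hj, -⟩ := h
  simp only [stdBasis, ite_eq_left_iff, zero_ne_one, imp_false, not_not] at hi hj
  exact hij.ne (hi.trans hj.symm)

lemma second_le {i' j' : Fin n} (h : FirstTwoIndices n v i j) (h' : FirstTwoIndices n v i' j') :
    j ≤ j' := by
  by_contra! hlt
  have hfirst : ∀ m, m < j → v m = 1 → m = i := fun m hm hvm => by
    by_contra hmi
    simp [h.2.2.2 m hm hmi] at hvm
  exact h'.1.ne ((hfirst i' (h'.1.trans hlt) h'.2.1).trans (hfirst j' hlt h'.2.2.1).symm)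

lemma unique {i' j' : Fin n} (h : FirstTwoIndices n v i j) (h' : FirstTwoIndices n v i' j') :
    i = i' ∧ j = j' := by
  have hj : j = j' := (h.second_le h').antisymm (h'.second_le h)
  refine ⟨by_contra fun hi => ?_, hj⟩
  simpa [h'.2.2.2 i (hj ▸ h.1) hi] using h.2.1

end FirstTwoIndices

lemma exists_firstTwoIndices {v : QV n} (h0 : v ≠ 0) (h1 : ∀ a, v ≠ stdBasis n a) :
    ∃ i j, FirstTwoIndices n v i j := by
  set s := Finset.univ.filter fun m => v m = 1
  have hmem : ∀ m, m ∈ s ↔ v m = 1 := by simp [s]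
  have hzero : ∀ m, m ∉ s → v m = 0 := fun m hm =>
    (zmod_two_eq_zero_or_one _).resolve_right ((hmem m).not.mp hm)
  have hs : s.Nonempty := by
    by_contra hs
    exact h0 (funext fun m => hzero m (by simp_all [Finset.not_nonempty_iff_eq_empty]))
  set i := s.min' hs
  have hs' : (s.erase i).Nonempty := by
    by_contra hs'
    refine h1 i (funext fun m => ?_)
    by_cases hm : m = i
    · simp [stdBasis, hm, (hmem i).mp (s.min'_mem hs)]
    · have : m ∉ s := fun h => hs' ⟨m, Finset.mem_erase.mpr ⟨hm, h⟩⟩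
      simp [stdBasis, hm, hzero m this]
  obtain ⟨hji, hjs⟩ := Finset.mem_erase.mp ((s.erase i).min'_mem hs')
  refine ⟨i, (s.erase i).min' hs', lt_of_le_of_ne (s.min'_le _ hjs) (Ne.symm hji),
    (hmem i).mp (s.min'_mem hs), (hmem _).mp hjs, fun m hm hmi => hzero m fun hms => ?_⟩
  exact hm.not_ge ((s.erase i).min'_le m (Finset.mem_erase.mpr ⟨hmi, hms⟩))

/-- `f⁻¹ w` is neither `0` nor a basis vector since `f` fixes those, so it has first two indices,
which `f` carries over to `w`. -/
lemma firstTwoIndices_symm_apply {f : QV n ≃ QV n} (h0 : f 0 = 0)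
    (hstd : ∀ i, f (stdBasis n i) = stdBasis n i)
    (hf : ∀ v i j, FirstTwoIndices n v i j → FirstTwoIndices n (f v) i j)
    {w : QV n} {i j : Fin n} (hw : FirstTwoIndices n w i j) :
    FirstTwoIndices n (f.symm w) i j := by
  obtain ⟨i', j', h'⟩ : ∃ i' j', FirstTwoIndices n (f.symm w) i' j' := by
    refine exists_firstTwoIndices (fun h => hw.ne_zero ?_) (fun a h => hw.ne_stdBasis a ?_)
    · rw [← f.apply_symm_apply w, h, h0]
    · rw [← f.apply_symm_apply w, h, hstd]
  obtain ⟨rfl, rfl⟩ := hw.unique (by simpa using hf _ _ _ h')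
  exact h'

end FirstTwo

section Quadratic

variable {n : ℕ}

def secondDiff (F : QV n → ZMod 2) (x u w : QV n) : ZMod 2 :=
  F (x + u + w) + F (x + u) + F (x + w) + F x

def quadCoeff (F : QV n → ZMod 2) : Matrix (Fin n) (Fin n) (ZMod 2) :=
  Matrix.of fun i j => if i < j then secondDiff F 0 (stdBasis n i) (stdBasis n j) else 0

/-- The quadratic polynomial agreeing with `F` at `0`, at the `eᵢ` and at the `eᵢ + eⱼ`. -/
def quadInterp (F : QV n → ZMod 2) (v : QV n) : ZMod 2 :=
  F 0 + (fun i => F (stdBasis n i) + F 0) ⬝ᵥ v + v ⬝ᵥ (quadCoeff F *ᵥ v)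

lemma apply_eq_apply_zero_of_add_stdBasis {M : Type*} {φ : QV n → M}
    (h : ∀ a x, φ (x + stdBasis n a) = φ x) (v : QV n) : φ v = φ 0 := by
  suffices hv : ∀ x, φ (x + v) = φ x by simpa using hv 0
  rw [← Finset.univ_sum_single v]
  refine Finset.sum_induction _ (fun w => ∀ x, φ (x + w) = φ x)
    (fun u w hu hw x => by rw [← add_assoc, hw, hu]) (by simp) fun i _ x => ?_
  rcases zmod_two_eq_zero_or_one (v i) with hi | hi
  · simp [hi]
  · rw [hi, ← stdBasis_eq_single, h]

lemma quadInterp_zero (F : QV n → ZMod 2) : quadInterp F 0 = F 0 := by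
  simp [quadInterp]

lemma quadInterp_stdBasis (F : QV n → ZMod 2) (a : Fin n) :
    quadInterp F (stdBasis n a) = F (stdBasis n a) := by
  simp [quadInterp, quadCoeff, stdBasis_eq_single, add_left_comm (F 0),
    CharTwo.add_self_eq_zero]

lemma quadCoeff_add_transpose (F : QV n → ZMod 2) (a b : Fin n) :
    quadCoeff F a b + quadCoeff F b a = secondDiff F 0 (stdBasis n a) (stdBasis n b) := by
  rcases lt_trichotomy a b with hab | rfl | hab
  · simp [quadCoeff, hab, hab.not_gt]
  · have hself : stdBasis n a + stdBasis n a = 0 := funext fun m => CharTwo.add_self_eq_zero _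
    simp only [quadCoeff, secondDiff, zero_add, hself]
    grind
  · simp [quadCoeff, hab, hab.not_gt, secondDiff, add_comm (stdBasis n b), add_right_comm]

lemma secondDiff_quadInterp (F : QV n → ZMod 2) (x : QV n) (a b : Fin n) :
    secondDiff (quadInterp F) x (stdBasis n a) (stdBasis n b)
      = secondDiff F 0 (stdBasis n a) (stdBasis n b) := by
  have hQ : ∀ i j, stdBasis n i ⬝ᵥ (quadCoeff F *ᵥ stdBasis n j) = quadCoeff F i j := by
    simp [stdBasis_eq_single]
  rw [← quadCoeff_add_transpose]
  simp only [secondDiff, quadInterp, dotProduct_add, add_dotProduct, Matrix.mulVec_add, hQ]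
  grind

/-- `F + quadInterp F` has vanishing second differences and vanishes at `0` and at the `eᵢ`, so
first its first differences and then the function itself are constant. -/
theorem eq_quadInterp_of_secondDiff (F : QV n → ZMod 2)
    (h : ∀ a b x, secondDiff F x (stdBasis n a) (stdBasis n b)
      = secondDiff F 0 (stdBasis n a) (stdBasis n b)) :
    F = quadInterp F := by
  set D : QV n → ZMod 2 := F + quadInterp F
  have hD0 : D 0 = 0 := by simp [D, quadInterp_zero, CharTwo.add_self_eq_zero]
  have hDe : ∀ a, D (stdBasis n a) = 0 := fun a => by
    simp [D, quadInterp_stdBasis, CharTwo.add_self_eq_zero]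
  have hD : ∀ a b x, D (x + stdBasis n a + stdBasis n b) + D (x + stdBasis n a)
      = D (x + stdBasis n b) + D x := by
    intro a b x
    have h1 := h a b x
    have h2 := secondDiff_quadInterp F x a b
    simp only [secondDiff] at h1 h2
    simp only [D, Pi.add_apply]
    grind
  have hDiff : ∀ a x, D (x + stdBasis n a) = D x := by
    intro a x
    have := apply_eq_apply_zero_of_add_stdBasis (φ := fun x => D (x + stdBasis n a) + D x)
      (fun b x => hD b a x) x
    simpa [hDe, hD0, CharTwo.add_eq_zero] using this
  funext v
  exact CharTwo.add_eq_zero.mp ((apply_eq_apply_zero_of_add_stdBasis hDiff v).trans hD0)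

end Quadratic

section Clifford

variable {n : ℕ}

lemma secondDiff_eq_of_exists_affine {F : QV n → ZMod 2} {w : QV n}
    (h : ∃ (ε : ZMod 2) (t : QV n), ∀ x, F (x + w) + F x = ε + t ⬝ᵥ x) (x u : QV n) :
    secondDiff F x u w = secondDiff F 0 u w := by
  obtain ⟨ε, t, ht⟩ := h
  have key : ∀ y, secondDiff F y u w = t ⬝ᵥ u := fun y => by
    have h1 := ht (y + u)
    have h2 := ht y
    rw [dotProduct_add] at h1
    rw [secondDiff]
    grind
  rw [key, key]

lemma XZGate_mem_pauliGroup (u z : QV n) : XZGate n u z ∈ PauliGroup n :=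
  ⟨1, u, z, Or.inl rfl, (one_smul ℂ _).symm⟩

lemma XZGate_zero_left (z : QV n) :
    XZGate n 0 z = Matrix.diagonal fun b => (-1 : ℂ) ^ ∑ i, (z i).val * (b i).val := by
  ext a b
  by_cases h : a = b <;> simp [XZGate, h]

lemma permGate_mul_apply (f : QV n ≃ QV n) (M : QMat n) (a b : QV n) :
    (permGate n f * M) a b = M (f.symm a) b := by
  rw [Matrix.mul_apply, Finset.sum_eq_single (f.symm a)]
  · simp [permGate]
  · rintro c - hc
    simp [permGate, f.symm_apply_eq.symm.not.mpr (Ne.symm hc)]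
  · simp

lemma mul_star_permGate_apply (f : QV n ≃ QV n) (M : QMat n) (a b : QV n) :
    (M * star (permGate n f)) a b = M a (f.symm b) := by
  rw [Matrix.mul_apply, Finset.sum_eq_single (f.symm b)]
  · simp [permGate]
  · rintro c - hc
    simp [permGate, f.symm_apply_eq.symm.not.mpr (Ne.symm hc)]
  · simp

lemma permGate_mul_diagonal_mul_star (f : QV n ≃ QV n) (d : QV n → ℂ) :
    permGate n f * Matrix.diagonal d * star (permGate n f) = Matrix.diagonal (d ∘ f.symm) := by
  ext a b
  rw [mul_star_permGate_apply, permGate_mul_apply]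
  simp [Matrix.diagonal_apply]

lemma diagonal_mul_XZGate_mul_star (d : QV n → ℂ) (w : QV n) :
    Matrix.diagonal d * XZGate n w 0 * star (Matrix.diagonal d)
      = Matrix.of fun a b => if a = b + w then d a * star (d b) else 0 := by
  ext a b
  simp [Matrix.star_eq_conjTranspose, Matrix.diagonal_conjTranspose, XZGate]

lemma natCast_eq_of_neg_one_pow_eq {a b : ℕ} (h : (-1 : ℂ) ^ a = (-1) ^ b) :
    (a : ZMod 2) = b := by
  rw [ZMod.natCast_eq_natCast_iff']
  rw [neg_one_pow_eq_pow_mod_two, neg_one_pow_eq_pow_mod_two (n := b)] at h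
  rcases Nat.mod_two_eq_zero_or_one a with ha | ha <;>
    rcases Nat.mod_two_eq_zero_or_one b with hb | hb <;> simp only [ha, hb] at h ⊢ <;> norm_num at h

lemma natCast_sum_val_mul_val (z x : QV n) :
    ((∑ i, (z i).val * (x i).val : ℕ) : ZMod 2) = z ⬝ᵥ x := by
  simp [dotProduct]

/-- Conjugating `Z^z` by a permutation gate in `𝒞₃` gives a diagonal Clifford gate `D`, and
`D X^w D†` is a Pauli gate `c X^w Z^t`; comparing entries shows that the discrete derivative of
`x ↦ z · f⁻¹(x)` in direction `w` is affine. -/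
theorem exists_affine_of_permGate_mem_cliffordLevel_three {f : QV n ≃ QV n}
    (hf : permGate n f ∈ CliffordLevel n 3) (z w : QV n) :
    ∃ (ε : ZMod 2) (t : QV n), ∀ x, z ⬝ᵥ f.symm (x + w) + z ⬝ᵥ f.symm x = ε + t ⬝ᵥ x := by
  set N : QV n → ℕ := fun b => ∑ i, (z i).val * (f.symm b i).val
  have hD : Matrix.diagonal (fun b => (-1 : ℂ) ^ N b) ∈ CliffordLevel n 2 := by
    have := hf.2 _ (XZGate_mem_pauliGroup 0 z)
    rwa [XZGate_zero_left, permGate_mul_diagonal_mul_star] at this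
  obtain ⟨c, u, t, -, hE⟩ := hD.2 _ (XZGate_mem_pauliGroup w 0)
  rw [diagonal_mul_XZGate_mul_star] at hE
  have hentry : ∀ x, (-1 : ℂ) ^ N (x + w) * (-1) ^ N x
      = c * if w = u then (-1) ^ ∑ i, (t i).val * (x i).val else 0 := fun x => by
    simpa [XZGate] using congrFun (congrFun hE (x + w)) x
  obtain rfl : w = u := by
    by_contra hwu
    simpa [hwu] using hentry 0
  have hc : c = (-1) ^ (N w + N 0) := by
    simpa [pow_add] using (hentry 0).symm
  refine ⟨(N w + N 0 : ℕ), t, fun x => ?_⟩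
  have hx := hentry x
  rw [if_pos rfl, hc, ← pow_add, ← pow_add] at hx
  have := natCast_eq_of_neg_one_pow_eq hx
  simpa only [N, Nat.cast_add, natCast_sum_val_mul_val] using this

end Clifford

section Construction

variable {n : ℕ}

lemma tofProd_apply_of_forall_ne {L : List (Fin n × Fin n × Fin n)} {m : Fin n}
    (hm : ∀ t ∈ L, t.2.2 ≠ m) (v : QV n) : tofProd L v m = v m := by
  induction L generalizing v with
  | nil => rfl
  | cons t L ih =>
    rw [tofProd, List.foldl_cons, ← tofProd, ih (fun s hs => hm s (List.mem_cons_of_mem t hs))]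
    simp [tofFun, (hm t List.mem_cons_self).symm]

/-- Since targets are sorted and controls precede targets, no gate acts on a control after it has
been read, so the controls may be read off the output. -/
lemma tofProd_apply {L : List (Fin n × Fin n × Fin n)} (hnd : L.Nodup)
    (hL : ∀ t ∈ L, t.1 < t.2.1 ∧ t.2.1 < t.2.2) (hsort : L.Pairwise (fun s t => s.2.2 ≤ t.2.2))
    (v : QV n) (m : Fin n) :
    tofProd L v m = v m + ∑ t ∈ L.toFinset,
      if t.2.2 = m then tofProd L v t.1 * tofProd L v t.2.1 else 0 := by
  induction L generalizing v with
  | nil => simp [tofProd]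
  | cons t L ih =>
    obtain ⟨htL, hnd⟩ := List.nodup_cons.mp hnd
    obtain ⟨hle, hsort⟩ := List.pairwise_cons.mp hsort
    obtain ⟨h1, h2⟩ := hL t List.mem_cons_self
    have hstep : tofProd (t :: L) v = tofProd L (tofFun n t.1 t.2.1 t.2.2 v) := rfl
    have hctrl : ∀ p, p < t.2.2 → tofProd (t :: L) v p = v p := fun p hp => by
      rw [hstep, tofProd_apply_of_forall_ne (fun s hs => (hp.trans_le (hle s hs)).ne')]
      simp [tofFun, hp.ne]
    rw [List.toFinset_cons, Finset.sum_insert (by simpa using htL), hctrl _ (h1.trans h2),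
      hctrl _ h2, hstep, ih hnd (fun s hs => hL s (List.mem_cons_of_mem t hs)) hsort]
    by_cases hm : t.2.2 = m
    · subst hm
      simp [tofFun, add_assoc]
    · simp [tofFun, Ne.symm hm, hm]

def quadMap (C : Fin n → Matrix (Fin n) (Fin n) (ZMod 2)) (v : QV n) : QV n :=
  fun k => v k + v ⬝ᵥ (C k *ᵥ v)

/-- The staircase consists of the gates `TOF_{i,j,k}` with `Cₖ i j = 1`, sorted by target. -/
theorem isStaircase_of_symm_eq_quadMap (f : QV n ≃ QV n)
    (C : Fin n → Matrix (Fin n) (Fin n) (ZMod 2)) (hC : ∀ k i j, C k i j ≠ 0 → i < j ∧ j < k)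
    (hf : ⇑f.symm = quadMap C) : IsStaircase n f := by
  set S := Finset.univ.filter fun t : Fin n × Fin n × Fin n => C t.2.2 t.1 t.2.1 = 1
  set L := S.toList.mergeSort fun s t => decide (s.2.2 ≤ t.2.2)
  have hperm : L.Perm S.toList := List.mergeSort_perm _ _
  have hnd : L.Nodup := hperm.nodup_iff.mpr S.nodup_toList
  have hS : L.toFinset = S := by
    ext t
    rw [List.mem_toFinset, hperm.mem_iff, Finset.mem_toList]
  have hL : ∀ t ∈ L, t.1 < t.2.1 ∧ t.2.1 < t.2.2 := fun t ht => by
    have htS : t ∈ S := hS ▸ List.mem_toFinset.mpr ht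
    exact hC _ _ _ ((Finset.mem_filter.mp htS).2 ▸ one_ne_zero)
  have hsort : L.Pairwise fun s t => s.2.2 ≤ t.2.2 := by
    simpa [L] using List.pairwise_mergeSort (le := fun s t : Fin n × Fin n × Fin n =>
      decide (s.2.2 ≤ t.2.2)) (fun _ _ _ => by simpa using le_trans)
      (fun s t => by simpa using le_total s.2.2 t.2.2) S.toList
  refine ⟨L, hnd, hL, hsort.isChain, funext fun v => (f.symm_apply_eq.mp ?_).symm⟩
  change f.symm (tofProd L v) = v
  funext m
  have hsum : ∀ w : QV n,
      (∑ t ∈ S, if t.2.2 = m then w t.1 * w t.2.1 else 0) = w ⬝ᵥ (C m *ᵥ w) := by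
    intro w
    simp only [S, dotProduct, Matrix.mulVec, Finset.mul_sum, Finset.sum_filter,
      Fintype.sum_prod_type]
    refine Finset.sum_congr rfl fun i _ => Finset.sum_congr rfl fun j _ => ?_
    rw [Finset.sum_eq_single m (fun k _ hk => by simp [hk]) (by simp)]
    rcases zmod_two_eq_zero_or_one (C m i j) with h | h <;> simp [h]
  rw [hf, quadMap, tofProd_apply hnd hL hsort v m, hS, hsum, add_assoc,
    CharTwo.add_self_eq_zero, add_zero]

end Construction

section Main

variable {n : ℕ}

/-- Coordinate `k` of `g (eᵢ + eⱼ)` vanishes below the second index `j`, except for the two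
ones at `i` and `j`, which cancel against `g eᵢ` and `g eⱼ`. -/
lemma lt_and_lt_of_quadCoeff_ne_zero {g : QV n → QV n} (h0 : g 0 = 0)
    (hstd : ∀ i, g (stdBasis n i) = stdBasis n i)
    (hg : ∀ v i j, FirstTwoIndices n v i j → FirstTwoIndices n (g v) i j) {i j k : Fin n}
    (hC : quadCoeff (g · k) i j ≠ 0) : i < j ∧ j < k := by
  by_cases hij : i < j
  · refine ⟨hij, lt_of_not_ge fun hkj => hC ?_⟩
    obtain ⟨-, hi, hj, hzero⟩ := hg _ i j (firstTwoIndices_stdBasis_add_stdBasis hij)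
    simp only [quadCoeff, Matrix.of_apply, if_pos hij, secondDiff, zero_add, hstd, h0,
      Pi.zero_apply, add_zero]
    rcases hkj.lt_or_eq with hkj | rfl
    · by_cases hki : k = i
      · subst hki
        simp [hi, stdBasis, hij.ne, CharTwo.add_self_eq_zero]
      · simp [hzero k hkj hki, stdBasis, hki, hkj.ne]
    · simp [hj, stdBasis, hij.ne', CharTwo.add_self_eq_zero]
  · simp [quadCoeff, hij] at hC

lemma symm_eq_quadMap {f : QV n ≃ QV n} (hf : permGate n f ∈ CliffordLevel n 3)
    (h0 : f.symm 0 = 0) (hstd : ∀ i, f.symm (stdBasis n i) = stdBasis n i) :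
    ⇑f.symm = quadMap fun k => quadCoeff (f.symm · k) := by
  funext v k
  have hquad := eq_quadInterp_of_secondDiff (f.symm · k) fun a b x =>
    secondDiff_eq_of_exists_affine (by
      simpa [single_one_dotProduct] using
        exists_affine_of_permGate_mem_cliffordLevel_three hf (Pi.single k 1) _) _ _
  rw [congrFun hquad v]
  simp [quadInterp, quadMap, h0, hstd, dotProduct, stdBasis]

end Main

theorem stmt16_general (n : ℕ) (f : QV n ≃ QV n)
    (hf : permGate n f ∈ CliffordLevel n 3) :
    IsStaircase n ⇑f ↔
      (f 0 = 0 ∧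
       (∀ i : Fin n, f (stdBasis n i) = stdBasis n i) ∧
       (∀ (v : QV n) (i j : Fin n),
          FirstTwoIndices n v i j → FirstTwoIndices n (f v) i j)) := by
  refine ⟨fun h => ⟨?_, fun i => ?_, fun v i j hv => ?_⟩, ?_⟩
  · exact h.preserves (P := (· = 0)) (fun i j k v _ _ hv => hv ▸ tofFun_zero i j k) rfl
  · exact h.preserves (P := (· = stdBasis n i))
      (fun _ _ k v hij _ hv => hv ▸ tofFun_stdBasis hij.ne k i) rfl
  · exact h.preserves (P := (FirstTwoIndices n · i j))
      (fun _ _ _ _ hab hbc hw => firstTwoIndices_tofFun hw hab hbc) hv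
  rintro ⟨h0, hstd, hFT⟩
  have h0' : f.symm 0 = 0 := f.symm_apply_eq.mpr h0.symm
  have hstd' : ∀ i, f.symm (stdBasis n i) = stdBasis n i :=
    fun i => f.symm_apply_eq.mpr (hstd i).symm
  have hFT' : ∀ w i j, FirstTwoIndices n w i j → FirstTwoIndices n (f.symm w) i j :=
    fun _ _ _ => firstTwoIndices_symm_apply h0 hstd hFT
  exact isStaircase_of_symm_eq_quadMap f _
    (fun _ _ _ => lt_and_lt_of_quadCoeff_ne_zero h0' hstd' hFT') (symm_eq_quadMap hf h0' hstd')

/-- A permutation gate `π ∈ 𝒞₃` is in staircase form iff `π(0)=0`,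
`π(eᵢ)=eᵢ` for all `i`, and for every vector with at least two nonzero coordinates the
indices of the first two nonzero coordinates of `v` and of `π(v)` coincide. -/
theorem stmt16 (n : ℕ) (hn : 1 ≤ n) (f : QV n ≃ QV n)
    (hf : permGate n f ∈ CliffordLevel n 3) :
    IsStaircase n ⇑f ↔
      (f 0 = 0 ∧
       (∀ i : Fin n, f (stdBasis n i) = stdBasis n i) ∧
       (∀ (v : QV n) (i j : Fin n),
          FirstTwoIndices n v i j → FirstTwoIndices n (f v) i j)) :=
  stmt16_general n f hf
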